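/- arXiv:2303.10889 — 2 statements merged into one kernel-verified Lean document; each statement's English description precedes it below -/
import Mathlib

section
/- Let D be a rich domain that is a decomposable domain. Then for each s ∈ M and all n ≥ 2, every strategy-proof unanimous marginal rule f^s : ([D]^s)^n → A^s satisfies the tops-only property. -/
noncomputable section

universe u

/-- A (strict) preference: a complete, antisymmetric, transitive binary relation,
i.e. a strict linear order, on `α`.  `rel a b` reads "`a` is strictly preferred to `b`". -/
structure Pref (α : Type u) : Type u where
  rel : α → α → Prop
  asymm : ∀ a b, rel a b → ¬ rel b a
  trans : ∀ a b c, rel a b → rel b c → rel a c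
  total : ∀ a b, a ≠ b → rel a b ∨ rel b a

namespace Pref

variable {α : Type u}

theorem exists_top [Finite α] [Nonempty α] (P : Pref α) :
    ∃ a : α, ∀ b, b ≠ a → P.rel a b := by
  haveI : IsTrans α P.rel := ⟨P.trans⟩
  haveI : IsIrrefl α P.rel := ⟨fun a h => P.asymm a a h h⟩
  obtain ⟨a, -, ha⟩ :=
    (Finite.wellFounded_of_trans_of_irrefl P.rel).has_min Set.univ
      ⟨Classical.arbitrary α, trivial⟩
  refine ⟨a, fun b hb => ?_⟩
  rcases P.total a b (fun h => hb h.symm) with h | h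
  · exact h
  · exact absurd h (ha b trivial)

/-- The top-ranked alternative `r₁(P)` of a preference. -/
def top [Finite α] [Nonempty α] (P : Pref α) : α := P.exists_top.choose

theorem top_spec [Finite α] [Nonempty α] (P : Pref α) :
    ∀ b, b ≠ P.top → P.rel P.top b := P.exists_top.choose_spec

/-- `rank P a = k` means that `a` is the `k`-th ranked alternative `r_k(P)`. -/
def rank (P : Pref α) (a : α) : ℕ := {b | P.rel b a}.ncard + 1

/-- The induced marginal preference `[P]^s` on component `s`:
derived from `P` by referring to the off-`s` components of the top alternative. -/
def marg {m : ℕ} {A : Fin m → Type u} [∀ s, Fintype (A s)] [∀ s, Nonempty (A s)]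
    (P : Pref (∀ s, A s)) (s : Fin m) : Pref (A s) where
  rel x y := P.rel (Function.update P.top s x) (Function.update P.top s y)
  asymm _ _ h := P.asymm _ _ h
  trans _ _ _ h₁ h₂ := P.trans _ _ _ h₁ h₂
  total x y hxy := P.total _ _ fun h => hxy (by
    have := congrFun h s
    simpa using this)

end Pref

section SocialChoice

variable {m : ℕ} {A : Fin m → Type u}

/-- `a` and `b` are similar, differing exactly in component `s`: `M(a,b) = {s}`. -/
def SimilarAt (a b : ∀ s, A s) (s : Fin m) : Prop :=
  a s ≠ b s ∧ ∀ t, t ≠ s → a t = b t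

/-- The "slice" `(A^s, x^{-s})` of alternatives agreeing with `x` off component `s`. -/
def Slice (s : Fin m) (x : ∀ t, A t) : Set (∀ t, A t) :=
  {a | ∀ t, t ≠ s → a t = x t}

variable [∀ s, Fintype (A s)] [∀ s, Nonempty (A s)]

/-- The induced marginal domain `[D]^s`. -/
def margDomain (D : Set (Pref (∀ s, A s))) (s : Fin m) : Set (Pref (A s)) :=
  (fun P => Pref.marg P s) '' D

/-- A preference is minimal-richness witnessed: every alternative is some preference's top. -/
def MinimallyRich (D : Set (Pref (∀ s, A s))) : Prop :=
  ∀ a : ∀ s, A s, ∃ P ∈ D, Pref.top P = a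

/-- A separable preference. -/
def Separable (P : Pref (∀ s, A s)) : Prop :=
  ∃ Q : ∀ s, Pref (A s), ∀ (s : Fin m) (a b : ∀ t, A t),
    SimilarAt a b s → (Q s).rel (a s) (b s) → P.rel a b

/-- A top-separable preference. -/
def TopSeparable (P : Pref (∀ s, A s)) : Prop :=
  ∀ (s : Fin m) (a b : ∀ t, A t), SimilarAt a b s → a s = Pref.top P s → P.rel a b

end SocialChoice

/-- Two preferences are complete reversals. -/
def CompleteReversals {α : Type u} (P P' : Pref α) : Prop :=
  ∀ a b, P.rel a b ↔ P'.rel b a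

section SCFProps

variable {β : Type u}

/-- Unanimity of a (marginal) social choice function on domain `E`. -/
def Unanimous [Finite β] [Nonempty β] (E : Set (Pref β)) {n : ℕ}
    (f : (Fin n → E) → β) : Prop :=
  ∀ (p : Fin n → E) (a : β), (∀ i, Pref.top (p i).1 = a) → f p = a

/-- Strategy-proofness of a (marginal) social choice function on domain `E`. -/
def StrategyProof (E : Set (Pref β)) {n : ℕ} (f : (Fin n → E) → β) : Prop :=
  ∀ (p : Fin n → E) (i : Fin n) (Q : E),
    f p ≠ f (Function.update p i Q) →
    (p i).1.rel (f p) (f (Function.update p i Q))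

/-- The tops-only property. -/
def TopsOnly [Finite β] [Nonempty β] (E : Set (Pref β)) {n : ℕ}
    (f : (Fin n → E) → β) : Prop :=
  ∀ p p' : Fin n → E, (∀ i, Pref.top (p i).1 = Pref.top (p' i).1) → f p = f p'

end SCFProps

section Decomp

variable {m : ℕ} {A : Fin m → Type u} [∀ s, Fintype (A s)] [∀ s, Nonempty (A s)]

/-- The profile of induced marginal preferences `([P₁]^s, …, [Pₙ]^s)`. -/
def margProfile (D : Set (Pref (∀ s, A s))) (s : Fin m) {n : ℕ}
    (p : Fin n → D) : Fin n → (margDomain D s) :=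
  fun i => ⟨Pref.marg (p i).1 s, ⟨(p i).1, (p i).2, rfl⟩⟩

/-- `f` is decomposed by the family of marginal SCFs `g`. -/
def Decomposable (D : Set (Pref (∀ s, A s))) {n : ℕ}
    (f : (Fin n → D) → (∀ s, A s))
    (g : ∀ s : Fin m, (Fin n → (margDomain D s)) → A s) : Prop :=
  ∀ p : Fin n → D, ∀ s, f p s = g s (margProfile D s p)

/-- A decomposable domain: for every `n ≥ 2` and every SCF, being a strategy-proof
unanimous rule is equivalent to being decomposable into strategy-proof unanimous
marginal rules. -/
def DecomposableDomain (D : Set (Pref (∀ s, A s))) : Prop :=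
  ∀ n : ℕ, 2 ≤ n → ∀ f : (Fin n → D) → (∀ s, A s),
    (Unanimous D f ∧ StrategyProof D f) ↔
      ∃ g : ∀ s : Fin m, (Fin n → (margDomain D s)) → A s,
        Decomposable D f g ∧
        ∀ s, Unanimous (margDomain D s) (g s) ∧ StrategyProof (margDomain D s) (g s)

/-- Diversity⁺: `D` contains two separable preferences that are complete reversals. -/
def DiversityPlus (D : Set (Pref (∀ s, A s))) : Prop :=
  ∃ P ∈ D, ∃ P' ∈ D, Separable P ∧ Separable P' ∧ CompleteReversals P P'

end Decomp

/-- Adjacency of two preferences: they coincide except that two alternatives ranked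
consecutively in `P` occupy the same two positions in reversed order in `P'`. -/
def Adjacent {β : Type u} (P P' : Pref β) : Prop :=
  ∃ a b : β, a ≠ b ∧
    P.rank b = P.rank a + 1 ∧ P'.rank b = P.rank a ∧ P'.rank a = P.rank a + 1 ∧
    ∀ c, c ≠ a → c ≠ b → P.rank c = P'.rank c

section AdjPlus

variable {m : ℕ} {A : Fin m → Type u} [∀ s, Fintype (A s)] [∀ s, Nonempty (A s)]

/-- Adjacency⁺ of two (separable) preferences. -/
def AdjacentPlus (P P' : Pref (∀ s, A s)) : Prop :=
  Separable P ∧ Separable P' ∧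
  ∃ (s : Fin m) (a b : A s), a ≠ b ∧
    (∀ z : ∀ t, A t,
      P.rank (Function.update z s b) = P.rank (Function.update z s a) + 1 ∧
      P'.rank (Function.update z s b) = P.rank (Function.update z s a) ∧
      P'.rank (Function.update z s a) = P.rank (Function.update z s a) + 1) ∧
    ∀ c : ∀ t, A t, c s ≠ a → c s ≠ b → P.rank c = P'.rank c

/-- Edges of the graph `G_{~/~⁺}`: adjacency or adjacency⁺. -/
def AdjEdge (P P' : Pref (∀ s, A s)) : Prop :=
  Adjacent P P' ∨ AdjacentPlus P P'

end AdjPlus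

/-- A path in a graph with edge relation `edge` and vertex set `S`, connecting `x` to `y`. -/
def IsPath {β : Type u} (edge : β → β → Prop) (S : Set β) (x y : β)
    (l : List β) : Prop :=
  2 ≤ l.length ∧ l.Nodup ∧ l.head? = some x ∧ l.getLast? = some y ∧
    (∀ z ∈ l, z ∈ S) ∧ List.Chain' edge l

/-- A path of preferences has `{a,b}`-restoration if the relative ranking of `a` and `b`
flips more than once along the path. -/
def HasRestoration {β : Type u} (l : List (Pref β)) (a b : β) : Prop :=
  ∃ o p q : Fin l.length, o < p ∧ p < q ∧
    (((l.get o).rel a b ∧ (l.get p).rel b a ∧ (l.get q).rel a b) ∨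
     ((l.get o).rel b a ∧ (l.get p).rel a b ∧ (l.get q).rel b a))

section RichDom

variable {m : ℕ} {A : Fin m → Type u} [∀ s, Fintype (A s)] [∀ s, Nonempty (A s)]

/-- The Interior⁺ property. -/
def InteriorPlus (D : Set (Pref (∀ s, A s))) : Prop :=
  ∀ P ∈ D, ∀ P' ∈ D, P ≠ P' → Pref.top P = Pref.top P' →
    ∃ l : List (Pref (∀ s, A s)),
      IsPath AdjEdge D P P' l ∧ ∀ Q ∈ l, Pref.top Q = Pref.top P

/-- The Exterior⁺ property (including the no-detour condition). -/
def ExteriorPlus (D : Set (Pref (∀ s, A s))) : Prop :=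
  ∀ P ∈ D, ∀ P' ∈ D, Pref.top P ≠ Pref.top P' →
    (∀ a b : ∀ s, A s, ∃ l : List (Pref (∀ s, A s)),
        IsPath AdjEdge D P P' l ∧ ¬ HasRestoration l a b) ∧
    ∀ s : Fin m, SimilarAt (Pref.top P) (Pref.top P') s →
      ∃ l : List (Pref (∀ s, A s)),
        IsPath AdjEdge D P P' l ∧ ∀ Q ∈ l, ∀ t, t ≠ s → Pref.top Q t = Pref.top P t

/-- A rich domain: minimally rich, diversity⁺, Interior⁺ and Exterior⁺. -/
def RichDomain (D : Set (Pref (∀ s, A s))) : Prop :=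
  MinimallyRich D ∧ DiversityPlus D ∧ InteriorPlus D ∧ ExteriorPlus D

end RichDom

/-- The weak interval `⟨x,y⟩` w.r.t. a linear order. -/
def wInterval {β : Type u} (lin : LinearOrder β) (x y : β) : Set β :=
  {z | (lin.le x z ∧ lin.le z y) ∨ (lin.le y z ∧ lin.le z x)}

/-- The strict (open) interval `Int⟨x,y⟩` w.r.t. a linear order. -/
def sInterval {β : Type u} (lin : LinearOrder β) (x y : β) : Set β :=
  {z | (lin.lt x z ∧ lin.lt z y) ∨ (lin.lt y z ∧ lin.lt z x)}

/-- `x` and `y` are marginal thresholds w.r.t. `lin`. -/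
def MarginalThresholds {β : Type u} (lin : LinearOrder β) (x y : β) : Prop :=
  x = y ∨ (x ≠ y ∧ 3 ≤ (wInterval lin x y).ncard)

/-- `x` and `y` are strongly connected in the marginal domain `E`: `x ≈ y`. -/
def StronglyConnected {β : Type u} (E : Set (Pref β)) (x y : β) : Prop :=
  ∃ Q ∈ E, ∃ Q' ∈ E,
    Pref.rank Q x = 1 ∧ Pref.rank Q y = 2 ∧ Pref.rank Q' y = 1 ∧ Pref.rank Q' x = 2 ∧
    ∀ z, z ≠ x → z ≠ y → Pref.rank Q z = Pref.rank Q' z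

/-- Edges of the graph `G_≈`. -/
def scEdge {β : Type u} (E : Set (Pref β)) (x y : β) : Prop :=
  x ≠ y ∧ StronglyConnected E x y

/-- The graph with edge relation `edge` on vertex set `B` is connected. -/
def GraphConnectedOn {β : Type u} (edge : β → β → Prop) (B : Set β) : Prop :=
  ∀ x ∈ B, ∀ y ∈ B, x ≠ y → ∃ l : List β, IsPath edge B x y l

/-- `v` is a leaf of the graph with edge relation `edge` on vertex set `B`:
it has a unique neighbor. -/
def IsLeaf {β : Type u} (edge : β → β → Prop) (B : Set β) (v : β) : Prop :=
  v ∈ B ∧ ∃! w, w ∈ B ∧ edge v w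

/-- A hybrid marginal preference on `lin` w.r.t. marginal thresholds `ylo`, `yhi`. -/
def HybridPref {β : Type u} [Finite β] [Nonempty β] (lin : LinearOrder β)
    (ylo yhi : β) (Q : Pref β) : Prop :=
  ∀ a b : β, a ≠ b → a ∈ sInterval lin (Pref.top Q) b →
    a ∉ sInterval lin ylo yhi → Q.rel a b

section MDH

variable {m : ℕ} {A : Fin m → Type u} [∀ s, Fintype (A s)] [∀ s, Nonempty (A s)]

/-- `xlo` and `xhi` are thresholds: marginal thresholds on every component. -/
def Thresholds (prec : ∀ s, LinearOrder (A s)) (xlo xhi : ∀ s, A s) : Prop :=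
  ∀ s, MarginalThresholds (prec s) (xlo s) (xhi s)

/-- A multidimensional hybrid preference on `≺ = ∏ prec s` w.r.t. thresholds `xlo`, `xhi`. -/
def MDHybrid (prec : ∀ s, LinearOrder (A s)) (xlo xhi : ∀ s, A s)
    (P : Pref (∀ s, A s)) : Prop :=
  ∀ (s : Fin m) (a b : ∀ t, A t), SimilarAt a b s →
    (a s = Pref.top P s → P.rel a b) ∧
    (a s ∈ sInterval (prec s) (Pref.top P s) (b s) →
      a s ∉ sInterval (prec s) (xlo s) (xhi s) → P.rel a b)

/-- A multidimensional single-peaked preference on `≺ = ∏ prec s`. -/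
def MSP (prec : ∀ s, LinearOrder (A s)) (P : Pref (∀ s, A s)) : Prop :=
  ∀ (s : Fin m) (a b : ∀ t, A t), SimilarAt a b s →
    a s ∈ wInterval (prec s) (Pref.top P s) (b s) → P.rel a b

/-- A multidimensional hybrid domain on `≺` w.r.t. thresholds `xlo`, `xhi`. -/
def MDHybridDomain (D : Set (Pref (∀ s, A s))) (prec : ∀ s, LinearOrder (A s))
    (xlo xhi : ∀ s, A s) : Prop :=
  Thresholds prec xlo xhi ∧
  (∀ P ∈ D, MDHybrid prec xlo xhi P) ∧
  ∀ s, GraphConnectedOn (scEdge (margDomain D s)) Set.univ ∧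
    (xlo s ≠ xhi s →
      ∀ v, ¬ IsLeaf (scEdge (margDomain D s)) (wInterval (prec s) (xlo s) (xhi s)) v)

/-- Strong connectedness⁺ of two alternatives: `a ≈⁺ b`. -/
def SCPlus (D : Set (Pref (∀ s, A s))) (a b : ∀ s, A s) : Prop :=
  ∃ P ∈ D, ∃ P' ∈ D, Pref.top P = a ∧ Pref.top P' = b ∧ AdjacentPlus P P'

end MDH

/-- The outcome of the fixed-ballot formula
`max_{J ⊆ N} ( min_{i ∈ J} ( r₁(Qᵢ), b_J ) )`. -/
def fbrValue {β : Type u} (lin : LinearOrder β) {n : ℕ} [Fintype β]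
    (bal : Finset (Fin n) → β) (tops : Fin n → β) : β :=
  letI := lin
  letI : DecidableEq β := lin.toDecidableEq
  Finset.univ.sup' ⟨∅, Finset.mem_univ _⟩
    fun J : Finset (Fin n) =>
      (insert (bal J) (J.image tops)).inf' (Finset.insert_nonempty _ _) id

/-- Fixed ballots: ballot unanimity and monotonicity. -/
def FBRBallots {β : Type u} [Fintype β] [Nonempty β] (lin : LinearOrder β) {n : ℕ}
    (bal : Finset (Fin n) → β) : Prop :=
  bal ∅ = @Finset.min' β lin Finset.univ Finset.univ_nonempty ∧
  bal Finset.univ = @Finset.max' β lin Finset.univ Finset.univ_nonempty ∧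
  ∀ J J' : Finset (Fin n), J ⊂ J' → lin.le (bal J) (bal J')

/-- A fixed ballot rule (FBR) on the linear order `lin`. -/
def IsFBR {β : Type u} [Fintype β] [Nonempty β] (lin : LinearOrder β)
    (E : Set (Pref β)) {n : ℕ} (f : (Fin n → E) → β) : Prop :=
  ∃ bal : Finset (Fin n) → β, FBRBallots lin bal ∧
    ∀ p : Fin n → E, f p = fbrValue lin bal fun i => Pref.top (p i).1

/-- An `(xlo, xhi)`-FBR: an FBR that additionally satisfies the
constrained-dictatorship condition. -/
def IsConstrainedFBR {β : Type u} [Fintype β] [Nonempty β] (lin : LinearOrder β)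
    (xlo xhi : β) (E : Set (Pref β)) {n : ℕ} (f : (Fin n → E) → β) : Prop :=
  ∃ bal : Finset (Fin n) → β, FBRBallots lin bal ∧
    (∀ p : Fin n → E, f p = fbrValue lin bal fun i => Pref.top (p i).1) ∧
    ∃ i : Fin n, ∀ J : Finset (Fin n),
      (i ∈ J → lin.le xhi (bal J)) ∧ (i ∉ J → lin.le (bal J) xlo)


/-!
Fix a voter `i` and extend the marginal rule `fs` to the full domain by letting `i` dictate
every component other than `s`. By decomposability the extension is strategy-proof, so whenever
one voter's change of preference changes the outcome, the two outcomes form a pair that the two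
preferences rank oppositely; along an edge of `G_{~/~⁺}` such a reversed pair is essentially
unique. Suppose the outcome changed along an edge between two preferences of voter `i` with the
same top. Moving every other voter along an Exterior⁺ path without restoration of the two
outcomes keeps both outcomes in place, until all voters share voter `i`'s top; there unanimity
of `fs` forces the `s`-outcome to be that top, which strategy-proofness of `fs` excludes.
The same reversal analysis shows that the `s`-outcome does not change along an edge that moves
voter `i`'s top in another component. With Interior⁺, the no-detour part of Exterior⁺ and
minimal richness, the `s`-outcome depends on voter `i`'s preference only through its `s`-th top,
which is tops-onlyness of `fs`.
-/

namespace Pref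

variable {α : Type u}

theorem irrefl (P : Pref α) (a : α) : ¬ P.rel a a :=
  fun h => P.asymm a a h h

theorem ne_of_rel (P : Pref α) {a b : α} (h : P.rel a b) : a ≠ b := by
  rintro rfl
  exact P.irrefl a h

theorem rel_of_not_rel (P : Pref α) {a b : α} (hne : a ≠ b) (h : ¬ P.rel a b) : P.rel b a :=
  (P.total a b hne).resolve_left h

theorem one_le_rank (P : Pref α) (a : α) : 1 ≤ P.rank a :=
  Nat.le_add_left 1 _

variable [Finite α]

theorem rank_lt_of_rel (P : Pref α) {a b : α} (h : P.rel a b) : P.rank a < P.rank b := by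
  have hsub : {c | P.rel c a} ⊂ {c | P.rel c b} :=
    ⟨fun c hc => P.trans _ _ _ hc h, fun hba => P.irrefl a (hba h)⟩
  simpa [Pref.rank] using Set.ncard_lt_ncard hsub (Set.toFinite _)

theorem rank_injective (P : Pref α) : Function.Injective P.rank := by
  intro a b hab
  by_contra hne
  rcases P.total a b hne with h | h
  · exact (P.rank_lt_of_rel h).ne hab
  · exact (P.rank_lt_of_rel h).ne hab.symm

variable [Nonempty α]

theorem top_unique (P : Pref α) {w : α} (hw : ∀ b, b ≠ w → P.rel w b) : w = P.top := by
  by_contra h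
  exact P.asymm _ _ (hw P.top (Ne.symm h)) (P.top_spec w h)

theorem rank_top (P : Pref α) : P.rank P.top = 1 := by
  have : {c | P.rel c P.top} = ∅ :=
    Set.eq_empty_of_forall_notMem fun c hc => P.asymm _ _ (P.top_spec c (P.ne_of_rel hc)) hc
  simp [Pref.rank, this]

theorem eq_top_of_rank_eq_one (P : Pref α) {a : α} (h : P.rank a = 1) : a = P.top :=
  P.rank_injective (h.trans P.rank_top.symm)

theorem top_marg {m : ℕ} {A : Fin m → Type u} [∀ s, Fintype (A s)] [∀ s, Nonempty (A s)]
    (P : Pref (∀ s, A s)) (s : Fin m) : (P.marg s).top = P.top s := by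
  refine ((P.marg s).top_unique fun b hb => ?_).symm
  change P.rel (Function.update P.top s (P.top s)) (Function.update P.top s b)
  rw [Function.update_eq_self]
  exact P.top_spec _ fun h => hb (by simpa using congrFun h s)

end Pref

section Flips

variable {β : Type u}

def FlipPair (V V' : Pref β) (a b : β) : Prop :=
  V.rel a b ∧ V'.rel b a

theorem FlipPair.ne_top [Finite β] [Nonempty β] {V V' : Pref β} {a b : β}
    (h : FlipPair V V' a b) (htop : V.top = V'.top) : a ≠ V.top := by
  rintro rfl
  exact V'.asymm _ _ h.2 (htop ▸ V'.top_spec b (htop ▸ (V.ne_of_rel h.1).symm))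

/-- `V'` arises from `V` by moving every `lower` alternative `c` one position down, just below
its partner `σ c`, which moves one position up; all other ranks are unchanged. -/
def RankSwap (V V' : Pref β) (lower : β → Prop) (σ : β → β) : Prop :=
  (∀ c, lower c →
    V.rank (σ c) = V.rank c + 1 ∧ V'.rank (σ c) = V.rank c ∧ V'.rank c = V.rank c + 1) ∧
  ∀ c, ¬ lower c → (∀ c', lower c' → c ≠ σ c') → V'.rank c = V.rank c

variable {V V' : Pref β} {lower : β → Prop} {σ : β → β}

theorem RankSwap.rank_cases (h : RankSwap V V' lower σ) (c : β) :
    (lower c ∧ V'.rank c = V.rank c + 1) ∨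
      (∃ c', lower c' ∧ c = σ c' ∧ V.rank c = V.rank c' + 1 ∧ V'.rank c = V.rank c') ∨
      V'.rank c = V.rank c := by
  by_cases hc : lower c
  · exact .inl ⟨hc, (h.1 c hc).2.2⟩
  by_cases hc' : ∃ c', lower c' ∧ c = σ c'
  · obtain ⟨c', hc', rfl⟩ := hc'
    exact .inr (.inl ⟨c', hc', rfl, (h.1 c' hc').1, (h.1 c' hc').2.1⟩)
  · push Not at hc'
    exact .inr (.inr (h.2 c hc hc'))

variable [Finite β]

theorem RankSwap.flipPair (h : RankSwap V V' lower σ) {a b : β} (hf : FlipPair V V' a b) :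
    lower a ∧ b = σ a := by
  have hab := V.rank_lt_of_rel hf.1
  have hba := V'.rank_lt_of_rel hf.2
  rcases h.rank_cases a with ⟨ha, ha'⟩ | ⟨c, -, -, ha, ha'⟩ | ha' <;>
    rcases h.rank_cases b with ⟨-, hb'⟩ | ⟨d, hd, rfl, hb, hb'⟩ | hb' <;> try omega
  obtain rfl : a = d := V.rank_injective (by omega)
  exact ⟨ha, rfl⟩

theorem RankSwap.top [Nonempty β] (h : RankSwap V V' lower σ) (hne : V.top ≠ V'.top) :
    lower V.top ∧ V'.top = σ V.top := by
  have h1 := V.rank_top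
  rcases h.rank_cases V.top with ⟨hl, -⟩ | ⟨c, -, -, hc, -⟩ | hr
  · exact ⟨hl, (V'.eq_top_of_rank_eq_one (by rw [(h.1 _ hl).2.1, h1])).symm⟩
  · have := V.one_le_rank c
    omega
  · exact absurd (V'.eq_top_of_rank_eq_one (hr.trans h1)) hne

end Flips

section AdjacencyFlips

variable {m : ℕ} {A : Fin m → Type u}

theorem similarAt_update {x : ∀ t, A t} {t : Fin m} {y : A t} (hy : x t ≠ y) :
    SimilarAt x (Function.update x t y) t :=
  ⟨by simpa using hy, fun _ h => (Function.update_of_ne h _ _).symm⟩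

variable {V V' : Pref (∀ s, A s)}

theorem Adjacent.exists_rankSwap {β : Type u} {V V' : Pref β} (h : Adjacent V V') :
    ∃ a b : β, RankSwap V V' (· = a) (fun _ => b) := by
  obtain ⟨a, b, -, h1, h2, h3, h4⟩ := h
  exact ⟨a, b, by rintro c rfl; exact ⟨h1, h2, h3⟩,
    fun c ha hb => (h4 c ha (hb a rfl)).symm⟩

theorem AdjacentPlus.exists_rankSwap (h : AdjacentPlus V V') :
    ∃ (s : Fin m) (a b : A s), a ≠ b ∧
      RankSwap V V' (· s = a) (fun c => Function.update c s b) := by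
  obtain ⟨-, -, s, a, b, hab, hz, h4⟩ := h
  refine ⟨s, a, b, hab, fun c hc => ?_, fun c ha hb => (h4 c ha fun hcb => ?_).symm⟩
  · simpa [← hc] using hz c
  · exact hb (Function.update c s a) (by simp) (by simp [← hcb])

variable [∀ s, Fintype (A s)] {a b : ∀ s, A s}

theorem AdjEdge.flipPair_eq_of_mem_slice (hedge : AdjEdge V V') {s : Fin m} {x a' b' : ∀ t, A t}
    (hf : FlipPair V V' a b) (hf' : FlipPair V V' a' b')
    (ha : a ∈ Slice s x) (hb : b ∈ Slice s x) (ha' : a' ∈ Slice s x) : a' = a ∧ b' = b := by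
  rcases hedge with hadj | hadj
  · obtain ⟨c, d, hcd⟩ := hadj.exists_rankSwap
    obtain ⟨rfl, rfl⟩ := hcd.flipPair hf
    obtain ⟨rfl, rfl⟩ := hcd.flipPair hf'
    exact ⟨rfl, rfl⟩
  · obtain ⟨t, c, d, hcd, hσ⟩ := hadj.exists_rankSwap
    obtain ⟨hac, rfl⟩ := hσ.flipPair hf
    obtain ⟨hac', rfl⟩ := hσ.flipPair hf'
    obtain rfl : t = s := by
      by_contra hts
      have := (ha t hts).trans (hb t hts).symm
      simp [hac, hcd] at this
    have : a' = a := funext fun r => by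
      by_cases hr : r = t
      · subst hr; rw [hac, hac']
      · rw [ha' r hr, ha r hr]
    exact ⟨this, this ▸ rfl⟩

theorem AdjEdge.flipPair_fst_eq (hedge : AdjEdge V V') {c : ∀ t, A t}
    (ha : FlipPair V V' a c) (hb : FlipPair V V' b c) : a = b := by
  rcases hedge with hadj | hadj
  · obtain ⟨d, e, hde⟩ := hadj.exists_rankSwap
    exact (hde.flipPair ha).1.trans (hde.flipPair hb).1.symm
  · obtain ⟨t, d, e, -, hσ⟩ := hadj.exists_rankSwap
    obtain ⟨had, rfl⟩ := hσ.flipPair ha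
    obtain ⟨hbd, hab⟩ := hσ.flipPair hb
    funext r
    by_cases hr : r = t
    · subst hr; rw [had, hbd]
    · simpa [hr] using congrFun hab r

theorem AdjEdge.flipPair_of_top_ne [∀ s, Nonempty (A s)] (hedge : AdjEdge V V')
    (hne : V.top ≠ V'.top) (hf : FlipPair V V' a b) :
    a = V.top ∨ ∃ t, SimilarAt V.top V'.top t ∧ SimilarAt a b t := by
  rcases hedge with hadj | hadj
  · obtain ⟨c, d, hcd⟩ := hadj.exists_rankSwap
    exact .inl ((hcd.flipPair hf).1.trans (hcd.top hne).1.symm)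
  · obtain ⟨t, c, d, hcd, hσ⟩ := hadj.exists_rankSwap
    obtain ⟨htc, htop⟩ := hσ.top hne
    obtain ⟨hac, rfl⟩ := hσ.flipPair hf
    exact .inr ⟨t, htop ▸ similarAt_update (htc ▸ hcd), similarAt_update (hac ▸ hcd)⟩

end AdjacencyFlips

section Paths

variable {β : Type u} {edge : β → β → Prop} {S : Set β} {x y : β} {l : List β}

theorem IsPath.head_mem (hl : IsPath edge S x y l) : x ∈ S :=
  hl.2.2.2.2.1 x (List.mem_of_head? hl.2.2.1)

theorem IsPath.last_mem (hl : IsPath edge S x y l) : y ∈ S :=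
  hl.2.2.2.2.1 y (List.mem_of_getLast? hl.2.2.2.1)

theorem IsPath.induction (hl : IsPath edge S x y l) (Z : β → Prop) (hZ : ∀ z ∈ l, Z z)
    (Inv : S → Prop) (step : ∀ u v : S, Z u → Z v → edge u v → Inv u → Inv v)
    (hx : Inv ⟨x, hl.head_mem⟩) : Inv ⟨y, hl.last_mem⟩ := by
  obtain ⟨-, -, hhead, hlast, hS, hchain⟩ := id hl
  obtain ⟨_, hy⟩ := (List.IsChain.iff_mem.1 hchain).induction
    (fun z => ∃ hz : z ∈ S, Inv ⟨z, hz⟩) l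
    (fun u v ⟨hu, hv, huv⟩ ⟨huS, hInv⟩ =>
      ⟨hS v hv, step ⟨u, huS⟩ ⟨v, hS v hv⟩ (hZ u hu) (hZ v hv) huv hInv⟩)
    (fun _ => by obtain ⟨ys, rfl⟩ := List.head?_eq_some_iff.1 hhead; exact ⟨_, hx⟩)
    y (List.mem_of_getLast? hlast)
  exact hy

theorem rel_of_not_hasRestoration {l : List (Pref β)} {a b : β} (hnr : ¬ HasRestoration l a b)
    {x y : Pref β} (hx : l.head? = some x) (hy : l.getLast? = some y)
    (hxab : x.rel a b) (hyab : y.rel a b) : ∀ z ∈ l, z.rel a b := by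
  intro z hz
  by_contra hzab
  obtain ⟨ys, rfl⟩ := List.head?_eq_some_iff.1 hx
  obtain ⟨p, rfl⟩ := List.get_of_mem hz
  have hlast : (x :: ys).get ⟨ys.length, by simp⟩ = y := by
    simpa [List.getLast?_eq_getElem?] using hy
  refine hnr ⟨⟨0, by simp⟩, p, ⟨ys.length, by simp⟩, ?_, ?_,
    .inl ⟨hxab, (List.get _ p).rel_of_not_rel (x.ne_of_rel hxab) hzab, hlast ▸ hyab⟩⟩
  · refine Nat.pos_of_ne_zero fun h0 => hzab ?_
    rwa [show p = ⟨0, by simp⟩ from Fin.ext h0]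
  · refine lt_of_le_of_ne (Nat.lt_succ_iff.1 (by simpa using p.2)) fun hp => hzab ?_
    rwa [hp, hlast]

theorem rel_iff_of_not_hasRestoration {l : List (Pref β)} {a b : β} (hab : a ≠ b)
    (hnr : ¬ HasRestoration l a b) {x y : Pref β} (hx : l.head? = some x)
    (hy : l.getLast? = some y) (hxy : x.rel a b ↔ y.rel a b) :
    ∀ z ∈ l, z.rel a b ↔ x.rel a b := by
  intro z hz
  by_cases hxab : x.rel a b
  · exact iff_of_true (rel_of_not_hasRestoration hnr hx hy hxab (hxy.1 hxab) z hz) hxab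
  · have hnr' : ¬ HasRestoration l b a :=
      fun ⟨o, p, q, hop, hpq, h⟩ => hnr ⟨o, p, q, hop, hpq, h.symm⟩
    have hyab : ¬ y.rel a b := mt hxy.2 hxab
    refine iff_of_false (z.asymm _ _ ?_) hxab
    exact rel_of_not_hasRestoration hnr' hx hy (x.rel_of_not_rel hab hxab)
      (y.rel_of_not_rel hab hyab) z hz

end Paths

section SocialChoiceFunctions

open Function

theorem apply_eq_of_forall_apply_update_eq {ι γ : Type*} [Fintype ι] [DecidableEq ι]
    {X : ι → Type*} (φ : (∀ i, X i) → γ) (r : ∀ i, X i → X i → Prop)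
    (h : ∀ p i y, r i (p i) y → φ (update p i y) = φ p) {p p' : ∀ i, X i}
    (hpp' : ∀ i, r i (p i) (p' i)) : φ p' = φ p := by
  have key : ∀ S : Finset ι, φ (fun i => if i ∈ S then p' i else p i) = φ p := by
    intro S
    induction S using Finset.induction_on with
    | empty => simp
    | insert k S hk ih =>
      have hupd : (fun i => if i ∈ insert k S then p' i else p i) =
          update (fun i => if i ∈ S then p' i else p i) k (p' k) := by
        funext i
        by_cases hi : i = k
        · subst hi; simp
        · simp [hi]
      rw [hupd, h _ _ _ (by simpa [hk] using hpp' k), ih]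
  simpa using key Finset.univ

variable {β : Type u} {E : Set (Pref β)} {n : ℕ} {f : (Fin n → E) → β}

theorem StrategyProof.flipPair_update (hf : StrategyProof E f) (p : Fin n → E) (i : Fin n)
    {V V' : E} (h : f (update p i V) ≠ f (update p i V')) :
    FlipPair V.1 V'.1 (f (update p i V)) (f (update p i V')) := by
  have key : ∀ V V' : E, f (update p i V) ≠ f (update p i V') →
      V.1.rel (f (update p i V)) (f (update p i V')) := by
    intro V V' h
    simpa using hf (update p i V) i V' (by simpa using h)
  exact ⟨key V V' h, key V' V (Ne.symm h)⟩

theorem StrategyProof.update_ne_top [Finite β] [Nonempty β] (hf : StrategyProof E f)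
    (p : Fin n → E) (i : Fin n) {V V' : E} (htop : V.1.top = V'.1.top)
    (h : f (update p i V) ≠ f (update p i V')) :
    f (update p i V) ≠ V.1.top :=
  (hf.flipPair_update p i h).ne_top htop

theorem topsOnly_of_forall_update_eq [Finite β] [Nonempty β]
    (h : ∀ p i (Q : E), Q.1.top = (p i).1.top → f (update p i Q) = f p) :
    TopsOnly E f := fun _ _ htop =>
  (apply_eq_of_forall_apply_update_eq f (fun _ P Q => Q.1.top = P.1.top) h
    fun i => (htop i).symm).symm

variable (E) in
def dictatorship [Finite β] [Nonempty β] (i : Fin n) (p : Fin n → E) : β :=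
  (p i).1.top

theorem unanimous_dictatorship [Finite β] [Nonempty β] (i : Fin n) :
    Unanimous E (dictatorship E i) :=
  fun _ _ h => h i

theorem strategyProof_dictatorship [Finite β] [Nonempty β] (i : Fin n) :
    StrategyProof E (dictatorship E i) := by
  intro p j Q h
  by_cases hji : j = i
  · subst hji
    simp only [dictatorship, update_self] at h ⊢
    exact (p j).1.top_spec _ (Ne.symm h)
  · simp [dictatorship, update_of_ne (Ne.symm hji)] at h

end SocialChoiceFunctions

theorem eq_of_mem_slice {m : ℕ} {A : Fin m → Type u} {s : Fin m} {x a b : ∀ t, A t}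
    (ha : a ∈ Slice s x) (hb : b ∈ Slice s x) (hs : a s = b s) : a = b := by
  funext t
  by_cases ht : t = s
  · subst ht; exact hs
  · rw [ha t ht, hb t ht]

section DictatorExtension

open Function

variable {m : ℕ} {A : Fin m → Type u} [∀ s, Fintype (A s)] [∀ s, Nonempty (A s)]
  {D : Set (Pref (∀ s, A s))} {s : Fin m} {n : ℕ}

theorem margProfile_update (t : Fin m) (p : Fin n → D) (i : Fin n) (V : D) :
    margProfile D t (update p i V) =
      update (margProfile D t p) i ⟨V.1.marg t, V.1, V.2, rfl⟩ := by
  funext j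
  by_cases hj : j = i
  · subst hj; simp [margProfile]
  · simp [margProfile, hj]

theorem exists_margProfile_eq (q : Fin n → margDomain D s) : ∃ p, margProfile D s p = q := by
  choose P hP hPq using fun j => (q j).2
  exact ⟨fun j => ⟨P j, hP j⟩, funext fun j => Subtype.ext (hPq j)⟩

/-- The decomposable rule whose marginal rules are `fs` on component `s` and the dictatorship of
voter `i` on every other component. -/
def dictatorExtension (fs : (Fin n → margDomain D s) → A s) (i : Fin n) :
    (Fin n → D) → ∀ t, A t :=
  fun p t => update (fun t => dictatorship (margDomain D t) i) s fs t (margProfile D t p)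

variable {fs : (Fin n → margDomain D s) → A s} {i : Fin n}

theorem dictatorExtension_apply_self (p : Fin n → D) :
    dictatorExtension fs i p s = fs (margProfile D s p) := by
  simp [dictatorExtension]

theorem dictatorExtension_mem_slice (p : Fin n → D) :
    dictatorExtension fs i p ∈ Slice s (p i).1.top := by
  intro t ht
  simp [dictatorExtension, ht, dictatorship, margProfile, Pref.top_marg]

theorem strategyProof_dictatorExtension (hdec : DecomposableDomain D) (hn : 2 ≤ n)
    (hu : Unanimous (margDomain D s) fs) (hsp : StrategyProof (margDomain D s) fs) :
    StrategyProof D (dictatorExtension fs i) := by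
  refine ((hdec n hn _).2 ⟨_, fun _ _ => rfl, fun t => ?_⟩).2
  by_cases ht : t = s
  · subst ht; simpa using ⟨hu, hsp⟩
  · simpa [ht] using ⟨unanimous_dictatorship i, strategyProof_dictatorship i⟩

theorem dictatorExtension_apply_self_of_tops (hu : Unanimous (margDomain D s) fs)
    {p : Fin n → D} {x : A s} (htops : ∀ j, (p j).1.top s = x) :
    dictatorExtension fs i p s = x := by
  rw [dictatorExtension_apply_self]
  exact hu _ x fun j => by simpa [margProfile, Pref.top_marg] using htops j

theorem dictatorExtension_update_ne_top (hsp : StrategyProof (margDomain D s) fs)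
    (p : Fin n → D) {V V' : D} (htop : V.1.top s = V'.1.top s)
    (h : dictatorExtension fs i (update p i V) s ≠
      dictatorExtension fs i (update p i V') s) :
    dictatorExtension fs i (update p i V) s ≠ V.1.top s := by
  simp only [dictatorExtension_apply_self, margProfile_update] at h ⊢
  simpa [Pref.top_marg] using hsp.update_ne_top _ i (by simpa [Pref.top_marg] using htop) h

end DictatorExtension

section Sweep

open Function

variable {m : ℕ} {A : Fin m → Type u} [∀ s, Fintype (A s)] [∀ s, Nonempty (A s)]
  {D : Set (Pref (∀ s, A s))} {n : ℕ} {F : (Fin n → D) → ∀ t, A t} {s : Fin m} {i : Fin n}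
  {W W' : D}

theorem apply_update_update_eq_of_adjEdge (hF : StrategyProof D F)
    (hdict : ∀ p, F p ∈ Slice s (p i).1.top) (hWW' : AdjEdge W.1 W'.1)
    (htop : W.1.top = W'.1.top) {j : Fin n} (hij : i ≠ j) {u v : D} (huv : AdjEdge u.1 v.1)
    {r : Fin n → D} {a b : ∀ t, A t} (ha : F (update (update r j u) i W) = a)
    (hb : F (update (update r j u) i W') = b) (hab : a ≠ b)
    (horder : u.1.rel a b ↔ v.1.rel a b) :
    F (update (update r j v) i W) = a ∧ F (update (update r j v) i W') = b := by
  have hflip_j : ∀ (V : D) {c c'}, F (update (update r j u) i V) = c →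
      F (update (update r j v) i V) = c' → c ≠ c' → FlipPair u.1 v.1 c c' := by
    intro V c c' hc hc' hcc'
    rw [update_comm (β := fun _ => D) hij.symm u V r] at hc
    rw [update_comm (β := fun _ => D) hij.symm v V r] at hc'
    subst hc hc'
    exact hF.flipPair_update _ j hcc'
  have hflip_i : ∀ (r' : Fin n → D) {c c'}, F (update r' i W) = c →
      F (update r' i W') = c' → c ≠ c' → FlipPair W.1 W'.1 c c' := by
    intro r' c c' hc hc' hcc'
    subst hc hc'
    exact hF.flipPair_update _ i hcc'
  have hslice : ∀ (r' : Fin n → D) (V : D) {c}, V.1.top = W.1.top → F (update r' i V) = c →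
      c ∈ Slice s W.1.top := by
    intro r' V c hV hc
    subst hc
    simpa [hV] using hdict (update r' i V)
  obtain ⟨a', ha'⟩ : ∃ a', F (update (update r j v) i W) = a' := ⟨_, rfl⟩
  obtain ⟨b', hb'⟩ : ∃ b', F (update (update r j v) i W') = b' := ⟨_, rfl⟩
  rw [ha', hb']
  by_cases ha'b' : a' = b'
  · -- A common outcome `a'` would arise from `a` or from `b` by a reversal from `u` to `v`,
    -- and none is possible.
    subst ha'b'
    exfalso
    by_cases h1 : a' = a
    · subst h1
      have := hflip_j W' hb hb' hab.symm
      exact u.1.asymm _ _ this.1 (horder.2 this.2)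
    by_cases h2 : a' = b
    · subst h2
      have := hflip_j W ha ha' hab
      exact v.1.asymm _ _ this.2 (horder.1 this.1)
    exact hab (huv.flipPair_fst_eq (hflip_j W ha ha' (Ne.symm h1))
      (hflip_j W' hb hb' (Ne.symm h2)))
  · exact hWW'.flipPair_eq_of_mem_slice (hflip_i _ ha hb hab) (hflip_i _ ha' hb' ha'b')
      (hslice _ W rfl ha) (hslice _ W' htop.symm hb) (hslice _ W rfl ha')

theorem exists_top_eq_apply_update_update_eq (hF : StrategyProof D F)
    (hdict : ∀ p, F p ∈ Slice s (p i).1.top)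
    (hExt : ExteriorPlus D) (hWW' : AdjEdge W.1 W'.1) (htop : W.1.top = W'.1.top) {j : Fin n}
    (hij : i ≠ j) {r : Fin n → D} {a b : ∀ t, A t} (ha : F (update r i W) = a)
    (hb : F (update r i W') = b) (hab : a ≠ b) :
    ∃ T : D, T.1.top = W.1.top ∧
      F (update (update r j T) i W) = a ∧ F (update (update r j T) i W') = b := by
  by_cases hj : (r j).1.top = W.1.top
  · exact ⟨r j, hj, by simpa using ha, by simpa using hb⟩
  have hWflip := hF.flipPair_update r i (V := W) (V' := W') (by rwa [ha, hb])
  rw [ha, hb] at hWflip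
  -- `W` and `W'` rank `a` and `b` oppositely, so one of them ranks them as voter `j` does.
  obtain ⟨T, hT, horder⟩ :
      ∃ T : D, T.1.top = W.1.top ∧ ((r j).1.rel a b ↔ T.1.rel a b) := by
    by_cases hjab : (r j).1.rel a b
    · exact ⟨W, rfl, iff_of_true hjab hWflip.1⟩
    · exact ⟨W', htop.symm, iff_of_false hjab (W'.1.asymm _ _ hWflip.2)⟩
  obtain ⟨l, hl, hnr⟩ := (hExt _ (r j).2 _ T.2 (hT ▸ hj)).1 a b
  have hlorder := rel_iff_of_not_hasRestoration hab hnr hl.2.2.1 hl.2.2.2.1 horder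
  refine ⟨T, hT, hl.induction (fun z => z.rel a b ↔ (r j).1.rel a b) hlorder
    (fun z => F (update (update r j z) i W) = a ∧ F (update (update r j z) i W') = b)
    (fun u v hu hv huv ⟨hua, hub⟩ =>
      apply_update_update_eq_of_adjEdge hF hdict hWW' htop hij huv hua hub hab
        (hu.trans hv.symm))
    (by simpa using ⟨ha, hb⟩)⟩

theorem exists_tops_eq_apply_update_eq (hF : StrategyProof D F)
    (hdict : ∀ p, F p ∈ Slice s (p i).1.top)
    (hExt : ExteriorPlus D) (hWW' : AdjEdge W.1 W'.1) (htop : W.1.top = W'.1.top)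
    (r : Fin n → D) (hne : F (update r i W) ≠ F (update r i W')) :
    ∃ r' : Fin n → D, (∀ j, j ≠ i → (r' j).1.top = W.1.top) ∧
      F (update r' i W) = F (update r i W) ∧ F (update r' i W') = F (update r i W') := by
  suffices h : ∀ S : Finset (Fin n), ∃ r' : Fin n → D,
      (∀ j ∈ S, j ≠ i → (r' j).1.top = W.1.top) ∧
      F (update r' i W) = F (update r i W) ∧ F (update r' i W') = F (update r i W') by
    obtain ⟨r', h1, h2⟩ := h Finset.univ
    exact ⟨r', fun j => h1 j (Finset.mem_univ j), h2⟩
  intro S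
  induction S using Finset.induction_on with
  | empty => exact ⟨r, by simp, rfl, rfl⟩
  | insert k S hk ih =>
    obtain ⟨r', hr'S, ha, hb⟩ := ih
    by_cases hki : k = i
    · subst hki
      refine ⟨r', fun j hj hji => hr'S j ?_ hji, ha, hb⟩
      simpa [hji] using hj
    obtain ⟨T, hT, hTa, hTb⟩ :=
      exists_top_eq_apply_update_update_eq hF hdict hExt hWW' htop (Ne.symm hki) ha hb hne
    refine ⟨update r' k T, fun j hj hji => ?_, hTa, hTb⟩
    by_cases hjk : j = k
    · subst hjk; simpa using hT
    · simpa [hjk] using hr'S j (by simpa [hjk] using hj) hji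

end Sweep

section TopsOnly

open Function

variable {m : ℕ} {A : Fin m → Type u} [∀ s, Fintype (A s)] [∀ s, Nonempty (A s)]
  {D : Set (Pref (∀ s, A s))} {s : Fin m} {n : ℕ} {fs : (Fin n → margDomain D s) → A s}
  {i : Fin n}

theorem dictatorExtension_update_eq_of_adjEdge
    (hF : StrategyProof D (dictatorExtension fs i)) (hu : Unanimous (margDomain D s) fs)
    (hsp : StrategyProof (margDomain D s) fs) (hExt : ExteriorPlus D) {W W' : D}
    (hWW' : AdjEdge W.1 W'.1) (htop : W.1.top = W'.1.top) (r : Fin n → D) :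
    dictatorExtension fs i (update r i W) = dictatorExtension fs i (update r i W') := by
  by_contra hne
  have hs : dictatorExtension fs i (update r i W) s ≠ dictatorExtension fs i (update r i W') s :=
    fun h => hne (eq_of_mem_slice (x := W.1.top)
      (by simpa using dictatorExtension_mem_slice (fs := fs) (i := i) (update r i W))
      (by simpa [htop] using dictatorExtension_mem_slice (fs := fs) (i := i) (update r i W')) h)
  refine dictatorExtension_update_ne_top hsp r (congrFun htop s) hs ?_
  -- once all other voters share the top of `W`, unanimity pins the `s`-outcome to it
  obtain ⟨r', htops, ha, -⟩ :=
    exists_tops_eq_apply_update_eq hF dictatorExtension_mem_slice hExt hWW' htop r hne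
  rw [← ha]
  refine dictatorExtension_apply_self_of_tops hu fun j => ?_
  by_cases hj : j = i
  · subst hj; simp
  · simp [hj, htops j hj]

theorem dictatorExtension_update_apply_self_eq_of_top_ne
    (hF : StrategyProof D (dictatorExtension fs i)) (hsp : StrategyProof (margDomain D s) fs)
    {V V' : D} (hVV' : AdjEdge V.1 V'.1) (hne : V.1.top ≠ V'.1.top) {t : Fin m} (hts : t ≠ s)
    (hagree : ∀ t', t' ≠ t → V.1.top t' = V'.1.top t') (p : Fin n → D) :
    dictatorExtension fs i (update p i V) s = dictatorExtension fs i (update p i V') s := by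
  by_contra h
  rcases hVV'.flipPair_of_top_ne hne (hF.flipPair_update p i fun e => h (congrFun e s)) with
    htopV | ⟨t', hsim, hflip⟩
  · exact dictatorExtension_update_ne_top hsp p (hagree s (Ne.symm hts)) h (congrFun htopV s)
  · obtain rfl : t' = t := by
      by_contra ht'
      exact hsim.1 (hagree t' ht')
    exact h (hflip.2 s (Ne.symm hts))

theorem dictatorExtension_update_apply_self_eq
    (hF : StrategyProof D (dictatorExtension fs i)) (hu : Unanimous (margDomain D s) fs)
    (hsp : StrategyProof (margDomain D s) fs) (hMR : MinimallyRich D) (hInt : InteriorPlus D)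
    (hExt : ExteriorPlus D) (p : Fin n → D) {V V' : D} (h : V.1.top s = V'.1.top s) :
    dictatorExtension fs i (update p i V) s = dictatorExtension fs i (update p i V') s := by
  have sameTop : ∀ V V' : D, V.1.top = V'.1.top →
      dictatorExtension fs i (update p i V) = dictatorExtension fs i (update p i V') := by
    intro V V' htop
    by_cases hVV' : V = V'
    · rw [hVV']
    obtain ⟨l, hl, hltop⟩ := hInt V.1 V.2 V'.1 V'.2 (fun e => hVV' (Subtype.ext e)) htop
    exact hl.induction (fun z => z.top = V.1.top) hltop
      (fun z => dictatorExtension fs i (update p i V) = dictatorExtension fs i (update p i z))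
      (fun u v hZu hZv huv h => h.trans
        (dictatorExtension_update_eq_of_adjEdge hF hu hsp hExt huv (hZu.trans hZv.symm) p)) rfl
  choose P hPD hPtop using hMR
  let φ : (∀ t, A t) → A s :=
    fun θ => dictatorExtension fs i (update p i ⟨P θ, hPD θ⟩) s
  have hφ : ∀ V : D, dictatorExtension fs i (update p i V) s = φ V.1.top :=
    fun V => congrFun (sameTop V _ (hPtop _).symm) s
  have similar : ∀ θ t (x : A t), t ≠ s → φ (update θ t x) = φ θ := by
    intro θ t x hts
    by_cases hx : θ t = x
    · rw [← hx, update_eq_self]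
    obtain ⟨l, hl, hlagree⟩ := (hExt _ (hPD θ) _ (hPD (update θ t x))
      (by rw [hPtop, hPtop]; exact fun e => hx (by simpa using congrFun e t))).2 t
      (by rw [hPtop, hPtop]; exact similarAt_update hx)
    refine (hl.induction (fun z => ∀ t', t' ≠ t → z.top t' = (P θ).top t') hlagree
      (fun z => dictatorExtension fs i (update p i z) s = φ θ) (fun u v hZu hZv huv h => ?_) rfl)
    rw [← h]
    by_cases htuv : u.1.top = v.1.top
    · exact congrFun (dictatorExtension_update_eq_of_adjEdge hF hu hsp hExt huv htuv p).symm s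
    · exact (dictatorExtension_update_apply_self_eq_of_top_ne hF hsp huv htuv hts
        (fun t' ht' => (hZu t' ht').trans (hZv t' ht').symm) p).symm
  rw [hφ, hφ]
  refine (apply_eq_of_forall_apply_update_eq φ (fun t y y' => t = s → y' = y)
    (fun θ t y hy => ?_) (by rintro t rfl; exact h.symm)).symm
  by_cases hts : t = s
  · subst hts; rw [hy rfl, update_eq_self]
  · exact similar θ t y hts

end TopsOnly

theorem stmt_13_general {m : ℕ} {A : Fin m → Type u}
    [∀ s, Fintype (A s)] [∀ s, Nonempty (A s)]
    (D : Set (Pref (∀ s, A s)))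
    (hrich : RichDomain D)
    (hdec : DecomposableDomain D)
    (s : Fin m) (n : ℕ) (hn : 2 ≤ n)
    (fs : (Fin n → (margDomain D s)) → A s)
    (hu : Unanimous (margDomain D s) fs) (hsp : StrategyProof (margDomain D s) fs) :
    TopsOnly (margDomain D s) fs := by
  obtain ⟨hMR, -, hInt, hExt⟩ := hrich
  refine topsOnly_of_forall_update_eq fun q i Q hQ => ?_
  obtain ⟨p, rfl⟩ := exists_margProfile_eq q
  obtain ⟨V, hV, hVQ⟩ := Q.2
  have hQV : (⟨V.marg s, V, hV, rfl⟩ : margDomain D s) = Q := Subtype.ext hVQ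
  have hF := strategyProof_dictatorExtension (i := i) hdec hn hu hsp
  have key := dictatorExtension_update_apply_self_eq hF hu hsp hMR hInt hExt p
    (V := ⟨V, hV⟩) (V' := p i) (by simpa [← hVQ, margProfile, Pref.top_marg] using hQ)
  rwa [dictatorExtension_apply_self, dictatorExtension_apply_self, margProfile_update, hQV,
    Function.update_eq_self] at key

/-- On a rich decomposable domain, every strategy-proof unanimous
marginal rule satisfies the tops-only property. -/
theorem stmt_13 {m : ℕ} (hm : 2 ≤ m) {A : Fin m → Type u}
    [∀ s, Fintype (A s)] [∀ s, Nonempty (A s)]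
    (hcard : ∀ s, 2 ≤ Fintype.card (A s))
    (D : Set (Pref (∀ s, A s)))
    (hrich : RichDomain D)
    (hdec : DecomposableDomain D)
    (s : Fin m) (n : ℕ) (hn : 2 ≤ n)
    (fs : (Fin n → (margDomain D s)) → A s)
    (hu : Unanimous (margDomain D s) fs) (hsp : StrategyProof (margDomain D s) fs) :
    TopsOnly (margDomain D s) fs :=
  stmt_13_general D hrich hdec s n hn fs hu hsp
end
end

section
/- Fix a linear order ≺^s on each A^s with ≺ = ∏_s ≺^s and thresholds x̲, x̄ ∈ A. (a) If |A^s| ≥ 3 for every s ∈ M and x̲^s = min^{≺^s}(A^s) and x̄^s = max^{≺^s}(A^s) for every s ∈ M, then a preference P is multidimensional hybrid on ≺ with respect to x̲, x̄ if and only if P is top-separable. (b) If x̲ = x̄, then a preference P is multidimensional hybrid on ≺ with respect to x̲, x̄ if and only if P is multidimensional single-peaked on ≺. -/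
noncomputable section

universe u

section Intervals

variable {β : Type u} {lin : LinearOrder β} {x y z : β}

theorem left_mem_wInterval : x ∈ wInterval lin x y := by
  let _ := lin
  rcases le_total x y with h | h
  · exact Or.inl ⟨le_rfl, h⟩
  · exact Or.inr ⟨h, le_rfl⟩

theorem sInterval_subset_wInterval : sInterval lin x y ⊆ wInterval lin x y := by
  let _ := lin
  rintro z (⟨hxz, hzy⟩ | ⟨hyz, hzx⟩)
  · exact Or.inl ⟨hxz.le, hzy.le⟩
  · exact Or.inr ⟨hyz.le, hzx.le⟩

theorem mem_sInterval_of_mem_wInterval (h : z ∈ wInterval lin x y) (hx : z ≠ x) (hy : z ≠ y) :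
    z ∈ sInterval lin x y := by
  let _ := lin
  rcases h with ⟨hxz, hzy⟩ | ⟨hyz, hzx⟩
  · exact Or.inl ⟨hxz.lt_of_ne' hx, hzy.lt_of_ne hy⟩
  · exact Or.inr ⟨hyz.lt_of_ne' hy, hzx.lt_of_ne hx⟩

theorem sInterval_self : sInterval lin x x = ∅ := by
  let _ := lin
  ext z
  simp only [sInterval, Set.mem_ofPred_eq, or_self, Set.mem_empty_iff_false, iff_false, not_and,
    not_lt]
  exact le_of_lt

theorem mem_sInterval_of_bot_top {lo hi : β} (hlo : ∀ w, lin.le lo w) (hhi : ∀ w, lin.le w hi)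
    (hz : z ∈ sInterval lin x y) : z ∈ sInterval lin lo hi := by
  let _ := lin
  have hlt : ∃ v w, v < z ∧ z < w := by
    rcases hz with ⟨hxz, hzy⟩ | ⟨hyz, hzx⟩
    exacts [⟨x, y, hxz, hzy⟩, ⟨y, x, hyz, hzx⟩]
  obtain ⟨v, w, hvz, hzw⟩ := hlt
  exact Or.inl ⟨(hlo v).trans_lt hvz, hzw.trans_le (hhi w)⟩

end Intervals

section MDHybrid

variable {m : ℕ} {A : Fin m → Type u} [∀ s, Fintype (A s)] [∀ s, Nonempty (A s)]
  {prec : ∀ s, LinearOrder (A s)} {xlo xhi : ∀ s, A s} {P : Pref (∀ s, A s)}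

theorem MDHybrid.topSeparable (hP : MDHybrid prec xlo xhi P) : TopSeparable P :=
  fun s a b hab => (hP s a b hab).1

theorem mdHybrid_iff_topSeparable_of_extremal (hlo : ∀ s z, (prec s).le (xlo s) z)
    (hhi : ∀ s z, (prec s).le z (xhi s)) : MDHybrid prec xlo xhi P ↔ TopSeparable P :=
  ⟨MDHybrid.topSeparable, fun hP s a b hab =>
    ⟨hP s a b hab, fun hmem hout => absurd (mem_sInterval_of_bot_top (hlo s) (hhi s) hmem) hout⟩⟩

theorem mdHybrid_iff_msp_of_eq (h : xlo = xhi) : MDHybrid prec xlo xhi P ↔ MSP prec P := by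
  subst h
  have hnot : ∀ s (z : A s), z ∉ sInterval (prec s) (xlo s) (xlo s) := by
    simp only [sInterval_self, Set.mem_empty_iff_false, not_false_eq_true, implies_true]
  constructor
  · intro hP s a b hab hmem
    by_cases htop : a s = Pref.top P s
    · exact (hP s a b hab).1 htop
    · exact (hP s a b hab).2 (mem_sInterval_of_mem_wInterval hmem htop hab.1) (hnot s _)
  · intro hP s a b hab
    exact ⟨fun htop => hP s a b hab (htop ▸ left_mem_wInterval),
      fun hmem _ => hP s a b hab (sInterval_subset_wInterval hmem)⟩

end MDHybrid

theorem stmt_19_general {m : ℕ} {A : Fin m → Type u}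
    [∀ s, Fintype (A s)] [∀ s, Nonempty (A s)]
    (prec : ∀ s, LinearOrder (A s)) (xlo xhi : ∀ s, A s) :
    ((∀ s, 3 ≤ Fintype.card (A s)) →
      (∀ s, xlo s = @Finset.min' (A s) (prec s) Finset.univ Finset.univ_nonempty ∧
            xhi s = @Finset.max' (A s) (prec s) Finset.univ Finset.univ_nonempty) →
      ∀ P : Pref (∀ s, A s), MDHybrid prec xlo xhi P ↔ TopSeparable P) ∧
    (xlo = xhi →
      ∀ P : Pref (∀ s, A s), MDHybrid prec xlo xhi P ↔ MSP prec P) := by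
  refine ⟨fun _ hext P => mdHybrid_iff_topSeparable_of_extremal ?_ ?_, fun h P =>
    mdHybrid_iff_msp_of_eq h⟩
  · intro s z
    rw [(hext s).1]
    exact @Finset.min'_le _ (prec s) _ z (Finset.mem_univ z)
  · intro s z
    rw [(hext s).2]
    exact @Finset.le_max' _ (prec s) _ z (Finset.mem_univ z)

/-- (a) with extremal thresholds, multidimensional hybridness coincides
with top-separability; (b) with coincident thresholds, it coincides with
multidimensional single-peakedness. -/
theorem stmt_19 {m : ℕ} (hm : 2 ≤ m) {A : Fin m → Type u}
    [∀ s, Fintype (A s)] [∀ s, Nonempty (A s)]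
    (hcard : ∀ s, 2 ≤ Fintype.card (A s))
    (prec : ∀ s, LinearOrder (A s)) (xlo xhi : ∀ s, A s) :
    ((∀ s, 3 ≤ Fintype.card (A s)) →
      (∀ s, xlo s = @Finset.min' (A s) (prec s) Finset.univ Finset.univ_nonempty ∧
            xhi s = @Finset.max' (A s) (prec s) Finset.univ Finset.univ_nonempty) →
      ∀ P : Pref (∀ s, A s), MDHybrid prec xlo xhi P ↔ TopSeparable P) ∧
    (xlo = xhi →
      ∀ P : Pref (∀ s, A s), MDHybrid prec xlo xhi P ↔ MSP prec P) :=
  stmt_19_general prec xlo xhi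
end
end
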